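/- arXiv:0807.4671 — 3 statements merged into one kernel-verified Lean document; each statement's English description precedes it below -/
import Mathlib

section
/- Let q = 2^r with r a positive integer, and let a ∈ 𝔽_q^*. Then Σ_{w ∈ O⁺(2,q)} λ(a · Tr w) = K(λ;a) + q − 1, where Tr w is the matrix trace of w. -/
open Finset Matrix

/-- The quadratic form `θ⁺(x) = ∑ i, x_i x_{n+i}` on `F^{2n}` (columns indexed by `Fin n ⊕ Fin n`). -/
def thetaPlus (F : Type) [Field F] (n : ℕ) (x : Fin n ⊕ Fin n → F) : F :=
  ∑ i : Fin n, x (Sum.inl i) * x (Sum.inr i)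

/-- The orthogonal group `O⁺(2n,q)`: invertible matrices preserving `θ⁺`. -/
noncomputable def OplusGrp (F : Type) [Field F] [Fintype F] [DecidableEq F] (n : ℕ) :
    Finset (Matrix (Fin n ⊕ Fin n) (Fin n ⊕ Fin n) F) := by
  classical
  exact Finset.univ.filter (fun w => IsUnit w ∧
    ∀ x : Fin n ⊕ Fin n → F, thetaPlus F n (w.mulVec x) = thetaPlus F n x)

/-- `SO⁺(2n,q)`: the kernel of `δ⁺(w) = Tr(B ᵗC)` on `O⁺(2n,q)`,
where `w = [[A,B],[C,D]]` in `n × n` blocks. -/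
noncomputable def SOplusGrp (F : Type) [Field F] [Fintype F] [DecidableEq F] (n : ℕ) :
    Finset (Matrix (Fin n ⊕ Fin n) (Fin n ⊕ Fin n) F) := by
  classical
  exact (OplusGrp F n).filter
    (fun w => Matrix.trace (Matrix.toBlocks₁₂ w * (Matrix.toBlocks₂₁ w)ᵀ) = 0)

/-- The trace map `tr(x) = x + x² + ⋯ + x^{2^{r−1}}`, valued in `𝔽₂ = {0,1} ⊆ F`. -/
def trF (F : Type) [Field F] (r : ℕ) (x : F) : F := ∑ i ∈ Finset.range r, x ^ 2 ^ i

/-- The canonical additive character `λ(x) = (−1)^{tr(x)} ∈ {±1} ⊆ ℤ`. -/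
noncomputable def lam (F : Type) [Field F] (r : ℕ) (x : F) : ℤ := by
  classical exact if trF F r x = 0 then 1 else -1

/-- The trace map `tr` viewed as a function into `𝔽₂ = ZMod 2`. -/
noncomputable def tr2 (F : Type) [Field F] (r : ℕ) (x : F) : ZMod 2 := by
  classical exact if trF F r x = 0 then 0 else 1

/-- The Kloosterman sum `K(λ;a) = ∑_{α ∈ F*} λ(α + aα⁻¹)`. -/
noncomputable def Kl (F : Type) [Field F] [Fintype F] (r : ℕ) (a : F) : ℤ := by
  classical
  exact ∑ α ∈ Finset.univ.filter (fun α : F => α ≠ 0), lam F r (α + a * α⁻¹)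

/-- The `m`-dimensional Kloosterman sum
`K_m(λ;a) = ∑_{α₁,…,α_m ∈ F*} λ(α₁ + ⋯ + α_m + aα₁⁻¹⋯α_m⁻¹)`;
for `m = 0` this is `K₀(λ;a) = λ(a)`. -/
noncomputable def Klm (F : Type) [Field F] [Fintype F] (r m : ℕ) (a : F) : ℤ := by
  classical
  exact ∑ v ∈ Finset.univ.filter (fun v : Fin m → F => ∀ i, v i ≠ 0),
    lam F r ((∑ i, v i) + a * (∏ i, v i)⁻¹)

/-- The power moment `MK^h = ∑_{a ∈ F*} K(λ;a)^h`. -/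
noncomputable def MK (F : Type) [Field F] [Fintype F] (r h : ℕ) : ℤ := by
  classical exact ∑ a ∈ Finset.univ.filter (fun a : F => a ≠ 0), (Kl F r a) ^ h

/-- The power moment `MK₂^h = ∑_{a ∈ F*} K₂(λ;a)^h` of 2-dimensional Kloosterman sums. -/
noncomputable def MK2 (F : Type) [Field F] [Fintype F] (r h : ℕ) : ℤ := by
  classical exact ∑ a ∈ Finset.univ.filter (fun a : F => a ≠ 0), (Klm F r 2 a) ^ h

/-- The binary code `C(G) = {u ∈ 𝔽₂^G : ∑_{g ∈ G} u_g Tr(g) = 0 in F}`. -/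
noncomputable def code (F : Type) [Field F] [Fintype F] [DecidableEq F]
    {ι : Type} [Fintype ι] [DecidableEq ι] (G : Finset (Matrix ι ι F)) :
    Finset (↥G → ZMod 2) := by
  classical
  exact Finset.univ.filter
    (fun u => ∑ g : ↥G, (u g).val • Matrix.trace (g : Matrix ι ι F) = 0)

/-- Number of codewords of Hamming weight `j` in the code `C(G)`. -/
noncomputable def wtCount (F : Type) [Field F] [Fintype F] [DecidableEq F]
    {ι : Type} [Fintype ι] [DecidableEq ι] (G : Finset (Matrix ι ι F)) (j : ℕ) : ℕ := by
  classical
  exact ((code F G).filter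
    (fun u => (Finset.univ.filter (fun g : ↥G => u g = 1)).card = j)).card

/-- `t! · S(h,t)` where `S(h,t)` is the Stirling number of the second kind,
`S(h,t) = (1/t!) ∑_{j=0}^{t} (−1)^{t−j} C(t,j) j^h`. -/
def tS (h t : ℕ) : ℤ :=
  ∑ j ∈ Finset.range (t + 1), (-1 : ℤ) ^ (t - j) * (t.choose j : ℤ) * (j : ℤ) ^ h

/-- Binomial coefficient with integer arguments: `0` whenever `k < 0` or `k > n`. -/
def ichoose (n k : ℤ) : ℤ := if 0 ≤ k ∧ k ≤ n then (n.toNat.choose k.toNat : ℤ) else 0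


/-! The group `O⁺(2,q)` consists of the matrices `diag(α, α⁻¹)` and `[[0, β], [β⁻¹, 0]]` with
`α, β ∈ 𝔽_q^*`, of traces `α + α⁻¹` and `0`. The anti-diagonal ones contribute `q - 1`, and the
substitution `α ↦ α / a` turns the diagonal ones into `K(λ; a²)`, which equals `K(λ; a)` because
`λ(x²) = λ(x)` and squaring permutes `𝔽_q^*`. -/

section CharacterSum

variable {F : Type} [Field F] {r : ℕ}

theorem lam_zero : lam F r 0 = 1 := by
  simp [lam, trF]

variable [Fintype F]

theorem trF_sq (hF : Fintype.card F = 2 ^ r) (x : F) : trF F r (x ^ 2) = trF F r x := by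
  have h := (sum_range_succ' (fun i => x ^ 2 ^ i) r).symm.trans (sum_range_succ _ r)
  simp only [Nat.pow_succ', pow_mul, pow_zero, pow_one, ← hF, FiniteField.pow_card] at h
  exact add_right_cancel h

theorem lam_sq (hF : Fintype.card F = 2 ^ r) (x : F) : lam F r (x ^ 2) = lam F r x := by
  rw [lam, lam, trF_sq hF]

theorem Kl_sq (hF : Fintype.card F = 2 ^ r) (a : F) : Kl F r (a ^ 2) = Kl F r a := by
  have := charP_of_card_eq_prime_pow hF
  refine (sum_bijective _ (bijective_frobenius F 2) (by simp) fun β _ => ?_).symm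
  rw [frobenius_def, ← lam_sq hF, CharTwo.add_sq, mul_pow, inv_pow]

theorem sum_filter_ne_zero_mul_add_mul_inv {M : Type*} [AddCommMonoid M] [DecidableEq F]
    (f : F → M) {a : F} (ha : a ≠ 0) :
    ∑ α ∈ univ.filter (· ≠ 0), f (a * α + a * α⁻¹) =
      ∑ β ∈ univ.filter (· ≠ 0), f (β + a ^ 2 * β⁻¹) := by
  refine sum_bijective _ (mulLeft_bijective₀ a ha) (by simp [ha]) fun α _ => ?_
  congr 1
  field_simp

end CharacterSum

section OrthogonalGroupOfRankOne

variable {F : Type} [Field F]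

def oplusDiag (α : F) : Matrix (Fin 1 ⊕ Fin 1) (Fin 1 ⊕ Fin 1) F :=
  diagonal (Sum.elim (fun _ => α) (fun _ => α⁻¹))

def oplusAntidiag (β : F) : Matrix (Fin 1 ⊕ Fin 1) (Fin 1 ⊕ Fin 1) F :=
  fromBlocks 0 (scalar (Fin 1) β) (scalar (Fin 1) β⁻¹) 0

theorem oplusDiag_injective : Function.Injective (oplusDiag (F := F)) := fun α β h => by
  simpa [oplusDiag] using congr_fun₂ h (.inl 0) (.inl 0)

theorem oplusAntidiag_injective : Function.Injective (oplusAntidiag (F := F)) := fun α β h => by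
  simpa [oplusAntidiag] using congr_fun₂ h (.inl 0) (.inr 0)

theorem oplusDiag_ne_oplusAntidiag {α : F} (hα : α ≠ 0) (β : F) :
    oplusDiag α ≠ oplusAntidiag β := fun h => by
  simpa [oplusDiag, oplusAntidiag, hα] using congr_fun₂ h (.inl 0) (.inl 0)

theorem trace_oplusDiag (α : F) : trace (oplusDiag α) = α + α⁻¹ := by
  simp [oplusDiag, trace_diagonal]

theorem trace_oplusAntidiag (β : F) : trace (oplusAntidiag β) = 0 := by
  simp [oplusAntidiag, trace, Fintype.sum_sum_type]

theorem oplusDiag_mul_oplusDiag_inv {α : F} (hα : α ≠ 0) : oplusDiag α * oplusDiag α⁻¹ = 1 := by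
  rw [oplusDiag, oplusDiag, diagonal_mul_diagonal, ← diagonal_one]
  congr 1
  ext (i | i) <;> simp [hα]

theorem oplusAntidiag_mul_self {β : F} (hβ : β ≠ 0) : oplusAntidiag β * oplusAntidiag β = 1 := by
  simp [oplusAntidiag, fromBlocks_multiply, hβ, fromBlocks_one]

theorem thetaPlus_one (x : Fin 1 ⊕ Fin 1 → F) : thetaPlus F 1 x = x (.inl 0) * x (.inr 0) := by
  simp [thetaPlus]

theorem preserves_thetaPlus_one_iff (w : Matrix (Fin 1 ⊕ Fin 1) (Fin 1 ⊕ Fin 1) F) :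
    (∀ x, thetaPlus F 1 (w *ᵥ x) = thetaPlus F 1 x) ↔
      w (.inl 0) (.inl 0) * w (.inr 0) (.inl 0) = 0 ∧
        w (.inl 0) (.inr 0) * w (.inr 0) (.inr 0) = 0 ∧
        w (.inl 0) (.inl 0) * w (.inr 0) (.inr 0) + w (.inl 0) (.inr 0) * w (.inr 0) (.inl 0) = 1 := by
  have hθ : ∀ x, thetaPlus F 1 (w *ᵥ x) =
      (w (.inl 0) (.inl 0) * x (.inl 0) + w (.inl 0) (.inr 0) * x (.inr 0)) *
        (w (.inr 0) (.inl 0) * x (.inl 0) + w (.inr 0) (.inr 0) * x (.inr 0)) := fun x => by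
    simp [thetaPlus_one, mulVec, dotProduct, Fintype.sum_sum_type]
  simp only [hθ, thetaPlus_one]
  constructor
  · intro h
    have h₁₀ := h (Sum.elim 1 0)
    have h₀₁ := h (Sum.elim 0 1)
    have h₁₁ := h 1
    simp only [Sum.elim_inl, Sum.elim_inr, Pi.one_apply, Pi.zero_apply] at h₁₀ h₀₁ h₁₁
    refine ⟨by linear_combination h₁₀, by linear_combination h₀₁, ?_⟩
    linear_combination h₁₁ - h₁₀ - h₀₁
  · rintro ⟨h₁₀, h₀₁, h₁₁⟩ x
    linear_combination x (.inl 0) ^ 2 * h₁₀ + x (.inr 0) ^ 2 * h₀₁ + x (.inl 0) * x (.inr 0) * h₁₁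

variable [Fintype F] [DecidableEq F]

theorem mem_OplusGrp_one_iff (w : Matrix (Fin 1 ⊕ Fin 1) (Fin 1 ⊕ Fin 1) F) :
    w ∈ OplusGrp F 1 ↔ ∃ α ≠ 0, w = oplusDiag α ∨ w = oplusAntidiag α := by
  simp only [OplusGrp, mem_filter, mem_univ, true_and, preserves_thetaPlus_one_iff]
  constructor
  · rintro ⟨-, hAC, hBD, hdet⟩
    rcases mul_eq_zero.mp hAC with hA | hC
    · rw [hA, zero_mul, zero_add] at hdet
      have hB := left_ne_zero_of_mul_eq_one hdet
      have hD := (mul_eq_zero.mp hBD).resolve_left hB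
      refine ⟨_, hB, .inr ?_⟩
      ext i j
      fin_cases i <;> fin_cases j <;> simp [oplusAntidiag, hA, hD, eq_inv_of_mul_eq_one_right hdet]
    · rw [hC, mul_zero, add_zero] at hdet
      have hA := left_ne_zero_of_mul_eq_one hdet
      have hB := (mul_eq_zero.mp hBD).resolve_right (right_ne_zero_of_mul_eq_one hdet)
      refine ⟨_, hA, .inl ?_⟩
      ext i j
      fin_cases i <;> fin_cases j <;> simp [oplusDiag, hB, hC, eq_inv_of_mul_eq_one_right hdet]
  · rintro ⟨α, hα, rfl | rfl⟩
    · refine ⟨isUnit_iff_exists.mpr ⟨_, oplusDiag_mul_oplusDiag_inv hα, ?_⟩, ?_⟩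
      · simpa using oplusDiag_mul_oplusDiag_inv (inv_ne_zero hα)
      · simp [oplusDiag, hα]
    · refine ⟨isUnit_iff_exists.mpr ⟨_, oplusAntidiag_mul_self hα, oplusAntidiag_mul_self hα⟩, ?_⟩
      simp [oplusAntidiag, hα]

theorem sum_OplusGrp_one {M : Type*} [AddCommMonoid M]
    (f : Matrix (Fin 1 ⊕ Fin 1) (Fin 1 ⊕ Fin 1) F → M) :
    ∑ w ∈ OplusGrp F 1, f w =
      ∑ α ∈ univ.filter (· ≠ 0), f (oplusDiag α) +
        ∑ β ∈ univ.filter (· ≠ 0), f (oplusAntidiag β) := by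
  have hO : OplusGrp F 1 =
      (univ.filter (· ≠ 0)).image oplusDiag ∪ (univ.filter (· ≠ 0)).image oplusAntidiag := by
    ext w
    simp only [mem_OplusGrp_one_iff, mem_union, mem_image, mem_filter, mem_univ, true_and]
    grind
  have hdisj : Disjoint ((univ.filter (· ≠ 0)).image (oplusDiag (F := F)))
      ((univ.filter (· ≠ 0)).image oplusAntidiag) := by
    simp only [disjoint_left, mem_image, mem_filter, mem_univ, true_and]
    rintro _ ⟨α, hα, rfl⟩ ⟨β, -, h⟩
    exact oplusDiag_ne_oplusAntidiag hα β h.symm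
  rw [hO, sum_union hdisj, sum_image oplusDiag_injective.injOn,
    sum_image oplusAntidiag_injective.injOn]

end OrthogonalGroupOfRankOne

theorem stmt5_general (r : ℕ) (F : Type) [Field F] [Fintype F] [DecidableEq F]
    (hF : Fintype.card F = 2 ^ r) (a : F) (ha : a ≠ 0) :
    ∑ w ∈ OplusGrp F 1, lam F r (a * Matrix.trace w) = Kl F r a + (2 ^ r : ℤ) - 1 := by
  have hdiag : ∑ α ∈ univ.filter (· ≠ 0), lam F r (a * trace (oplusDiag α)) = Kl F r a := by
    simp only [trace_oplusDiag, mul_add]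
    rw [sum_filter_ne_zero_mul_add_mul_inv _ ha, ← Kl_sq hF, Kl]
    -- `Kl` filters with a classical decidability instance
    convert rfl
  have hantidiag :
      ∑ β ∈ univ.filter (· ≠ 0), lam F r (a * trace (oplusAntidiag β)) = 2 ^ r - 1 := by
    simp [trace_oplusAntidiag, lam_zero, filter_ne', hF]
  rw [sum_OplusGrp_one, hdiag, hantidiag]
  ring

theorem stmt5 (r : ℕ) (hr : 1 ≤ r) (F : Type) [Field F] [Fintype F] [DecidableEq F]
    (hF : Fintype.card F = 2 ^ r) (a : F) (ha : a ≠ 0) :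
    ∑ w ∈ OplusGrp F 1, lam F r (a * Matrix.trace w) = Kl F r a + (2 ^ r : ℤ) - 1 :=
  stmt5_general r F hF a ha
end

section
/- Let q = 2^r with r a positive integer, let β ∈ 𝔽_q^*, and let a ∈ 𝔽_q be such that the polynomial x² + x + a is irreducible over 𝔽_q (equivalently, a is not of the form α² + α for any α ∈ 𝔽_q). Then Σ_{α ∈ 𝔽_q} λ(β/(α² + α + a)) = −K(λ;β) − 1. -/
open Finset Matrix

/-! In characteristic `2` the Artin–Schreier map `x ↦ x² + x` is additive with kernel `{0, 1}`,
and `Tr (x² + x) = Tr x + Tr x = 0`; comparing cardinalities, its image is exactly the kernel of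
the absolute trace. So `y` has `1 + λ(y)` preimages and the sum is
`∑_y (1 + λ(y)) λ(β / (y + a))`. Substituting `z = y + a` and using `λ(a) = -1` (`a` is not of the
form `α² + α`) gives `∑_z λ(β / z) - ∑_z λ(z) λ(β / z) = 0 - (1 + K(λ; β))`. -/

section CharTwo

variable {F : Type*} [Field F] [CharP F 2]

lemma sq_add_self_eq_sq_add_self_iff {x y : F} :
    x ^ 2 + x = y ^ 2 + y ↔ x = y ∨ x = y + 1 := by
  have h2 : (2 : F) = 0 := CharTwo.two_eq_zero
  constructor
  · intro h
    have hfac : (x + y) * (x + y + 1) = 0 := by linear_combination h + (x * y + y ^ 2 + y) * h2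
    rcases mul_eq_zero.mp hfac with h' | h'
    · exact Or.inl (by linear_combination h' - y * h2)
    · exact Or.inr (by linear_combination h' - (y + 1) * h2)
  · rintro (rfl | rfl)
    · rfl
    · linear_combination (y + 1) * h2

variable (F) in
def sqAddSelf : F →+ F where
  toFun x := x ^ 2 + x
  map_zero' := by simp
  map_add' x y := by simp only [CharTwo.add_sq]; ring

lemma sqAddSelf_apply (x : F) : sqAddSelf F x = x ^ 2 + x := rfl

lemma card_filter_sq_add_self_eq [Fintype F] [DecidableEq F] (y : F) :
    #{x | x ^ 2 + x = y ^ 2 + y} = 2 := by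
  have hfiber : ({x | x ^ 2 + x = y ^ 2 + y} : Finset F) = {y, y + 1} := by
    ext x
    simp [sq_add_self_eq_sq_add_self_iff]
  rw [hfiber, card_pair]
  simp

lemma card_ker_sqAddSelf : Nat.card (sqAddSelf F).ker = 2 := by
  have hker : ((sqAddSelf F).ker : Set F) = {0, 1} := by
    ext x
    simpa [sqAddSelf_apply] using sq_add_self_eq_sq_add_self_iff (x := x) (y := 0)
  rw [← SetLike.coe_sort_coe, hker, Nat.card_coe_set_eq, Set.ncard_pair zero_ne_one]

end CharTwo

section Trace

variable (F : Type*) [Field F] [Algebra (ZMod 2) F]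

noncomputable def traceChar : AddChar F ℤ :=
  (AddChar.zmodChar 2 (by norm_num : (-1 : ℤ) ^ 2 = 1)).compAddMonoidHom
    (Algebra.trace (ZMod 2) F).toAddMonoidHom

variable {F}

lemma traceChar_apply (x : F) :
    traceChar F x = if Algebra.trace (ZMod 2) F x = 0 then 1 else -1 := by
  change (-1 : ℤ) ^ (Algebra.trace (ZMod 2) F x).val = _
  generalize Algebra.trace (ZMod 2) F x = t
  fin_cases t <;> rfl

variable [Fintype F]

lemma traceChar_ne_one : traceChar F ≠ 1 := by
  obtain ⟨x, hx⟩ := Algebra.trace_surjective (ZMod 2) F 1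
  refine AddChar.ne_one_iff.mpr ⟨x, ?_⟩
  rw [traceChar_apply, hx]
  decide

lemma sum_traceChar : ∑ x, traceChar F x = 0 :=
  AddChar.sum_eq_zero_of_ne_one traceChar_ne_one

lemma trace_sq (x : F) : Algebra.trace (ZMod 2) F (x ^ 2) = Algebra.trace (ZMod 2) F x := by
  simpa [FiniteField.coe_frobeniusAlgEquivOfAlgebraic] using
    Algebra.trace_eq_of_algEquiv (FiniteField.frobeniusAlgEquivOfAlgebraic (ZMod 2) F) x

lemma exists_sq_add_self_eq_iff (y : F) :
    (∃ x, x ^ 2 + x = y) ↔ Algebra.trace (ZMod 2) F y = 0 := by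
  have : CharP F 2 := charP_of_injective_algebraMap' (ZMod 2) 2
  let tr := (Algebra.trace (ZMod 2) F).toAddMonoidHom
  have hrange : (sqAddSelf F).range = tr.ker := by
    refine AddSubgroup.eq_of_le_of_card_ge ?_ ?_
    · rintro _ ⟨x, rfl⟩
      simp [tr, sqAddSelf_apply, trace_sq, CharTwo.add_self_eq_zero]
    · have htr : tr.range = ⊤ := AddMonoidHom.range_eq_top.mpr (Algebra.trace_surjective _ _)
      have h₁ := tr.ker.card_mul_index
      have h₂ := (sqAddSelf F).ker.card_mul_index
      rw [AddSubgroup.index_ker, htr, AddSubgroup.card_top, Nat.card_zmod] at h₁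
      rw [AddSubgroup.index_ker, card_ker_sqAddSelf] at h₂
      omega
  exact (AddSubgroup.ext_iff.mp hrange y).trans AddMonoidHom.mem_ker

lemma card_filter_sq_add_self_eq_one_add_traceChar [DecidableEq F] (y : F) :
    (#{x | x ^ 2 + x = y} : ℤ) = 1 + traceChar F y := by
  have : CharP F 2 := charP_of_injective_algebraMap' (ZMod 2) 2
  rw [traceChar_apply]
  split_ifs with hy
  · obtain ⟨x, rfl⟩ := (exists_sq_add_self_eq_iff y).mpr hy
    rw [card_filter_sq_add_self_eq]
    norm_num
  · have hempty : ({x | x ^ 2 + x = y} : Finset F) = ∅ :=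
      filter_false_of_mem fun x _ hx => hy ((exists_sq_add_self_eq_iff y).mp ⟨x, hx⟩)
    rw [hempty]
    norm_num

lemma sum_comp_sq_add_self (f : F → ℤ) :
    ∑ x, f (x ^ 2 + x) = ∑ y, (1 + traceChar F y) * f y := by
  classical
  rw [← sum_fiberwise univ (fun x => x ^ 2 + x)]
  refine sum_congr rfl fun y _ => ?_
  rw [sum_congr rfl fun x hx => congrArg f (mem_filter.mp hx).2, sum_const, nsmul_eq_mul]
  convert congrArg (· * f y) (card_filter_sq_add_self_eq_one_add_traceChar y)

lemma sum_traceChar_div {β : F} (hβ : β ≠ 0) : ∑ z, traceChar F (β / z) = 0 := by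
  rw [← sum_traceChar (F := F)]
  -- `z ↦ β / z` is an involution of all of `F`, since `β / 0 = 0`.
  have hinv : Function.Involutive (β / · : F → F) := fun z => by
    by_cases hz : z = 0
    · simp [hz]
    · exact div_div_cancel₀ hβ
  exact Fintype.sum_bijective _ hinv.bijective _ _ fun _ => rfl

lemma sum_traceChar_mul_traceChar_div [DecidableEq F] (β : F) :
    ∑ z, traceChar F z * traceChar F (β / z) =
      1 + ∑ z ∈ univ.filter (· ≠ 0), traceChar F (z + β * z⁻¹) := by
  rw [← add_sum_erase univ _ (mem_univ 0), filter_ne']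
  simp [AddChar.map_add_eq_mul, div_eq_mul_inv]

end Trace

lemma trF_eq_algebraMap_trace {F : Type} [Field F] [Fintype F] [Algebra (ZMod 2) F] {r : ℕ}
    (hF : Fintype.card F = 2 ^ r) (x : F) :
    trF F r x = algebraMap (ZMod 2) F (Algebra.trace (ZMod 2) F x) := by
  have hr : Module.finrank (ZMod 2) F = r := by
    have h := Module.card_eq_pow_finrank (K := ZMod 2) (V := F)
    rw [hF, ZMod.card] at h
    exact (Nat.pow_right_injective le_rfl h).symm
  rw [FiniteField.algebraMap_trace_eq_sum_pow, hr, Nat.card_zmod]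
  rfl

lemma lam_eq_traceChar {F : Type} [Field F] [Fintype F] [Algebra (ZMod 2) F] {r : ℕ}
    (hF : Fintype.card F = 2 ^ r) : lam F r = traceChar F := by
  funext x
  classical
  rw [lam, traceChar_apply, trF_eq_algebraMap_trace hF]
  exact if_congr (map_eq_zero_iff _ (algebraMap (ZMod 2) F).injective) rfl rfl

lemma Kl_eq_sum_traceChar {F : Type} [Field F] [Fintype F] [DecidableEq F] [Algebra (ZMod 2) F]
    {r : ℕ} (hF : Fintype.card F = 2 ^ r) (β : F) :
    Kl F r β = ∑ z ∈ univ.filter (· ≠ 0), traceChar F (z + β * z⁻¹) := by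
  rw [Kl, lam_eq_traceChar hF]
  congr 1
  ext
  simp

theorem stmt14_general (r : ℕ) (F : Type) [Field F] [Fintype F]
    (hF : Fintype.card F = 2 ^ r) (β : F) (hβ : β ≠ 0) (a : F)
    (ha : ∀ α : F, α ^ 2 + α ≠ a) :
    ∑ α : F, lam F r (β / (α ^ 2 + α + a)) = -(Kl F r β) - 1 := by
  classical
  have : CharP F 2 := charP_of_card_eq_prime_pow hF
  let _ : Algebra (ZMod 2) F := ZMod.algebra F 2
  have hψa : traceChar F a = -1 := by
    have hta : Algebra.trace (ZMod 2) F a ≠ 0 := fun h =>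
      let ⟨x, hx⟩ := (exists_sq_add_self_eq_iff a).mpr h
      ha x hx
    rw [traceChar_apply, if_neg hta]
  rw [lam_eq_traceChar hF, Kl_eq_sum_traceChar hF]
  calc ∑ x, traceChar F (β / (x ^ 2 + x + a))
      = ∑ y, (1 + traceChar F y) * traceChar F (β / (y + a)) :=
        sum_comp_sq_add_self fun y => traceChar F (β / (y + a))
    _ = ∑ z, (1 + traceChar F (z + a)) * traceChar F (β / z) :=
        (Fintype.sum_equiv (Equiv.addRight a) _ _ fun z => by simp [CharTwo.add_cancel_right]).symm
    _ = ∑ z, traceChar F (β / z) - ∑ z, traceChar F z * traceChar F (β / z) := by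
        rw [← sum_sub_distrib]
        refine sum_congr rfl fun z _ => ?_
        rw [AddChar.map_add_eq_mul, hψa]
        ring
    _ = _ := by
        rw [sum_traceChar_div hβ, sum_traceChar_mul_traceChar_div]
        ring

theorem stmt14 (r : ℕ) (hr : 1 ≤ r) (F : Type) [Field F] [Fintype F] [DecidableEq F]
    (hF : Fintype.card F = 2 ^ r) (β : F) (hβ : β ≠ 0) (a : F)
    (ha : ∀ α : F, α ^ 2 + α ≠ a) :
    ∑ α : F, lam F r (β / (α ^ 2 + α + a)) = -(Kl F r β) - 1 :=
  stmt14_general r F hF β hβ a ha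
end

section
/- Let q = 2^r with r a positive integer, and let G = SO⁺(4,q) with elements listed as g₁,...,g_N. Then the 𝔽_2-linear map 𝔽_q → 𝔽_2^N sending a to c(a) = (tr(a·Tr g₁),...,tr(a·Tr g_N)) is injective, and its image is exactly the dual code C(G)^⊥ = {v ∈ 𝔽_2^N : v·u = 0 for all u ∈ C(G)}; in particular it is an 𝔽_2-linear isomorphism from 𝔽_q onto C(G)^⊥. -/
open Finset Matrix

/-! In characteristic 2 the map `tr` is the absolute trace `𝔽_q → 𝔽₂`, whose trace form
`(a, x) ↦ tr (a x)` is nondegenerate. The code `C(G)` is the kernel of `u ↦ ∑ u_g Tr g`, so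
`C(G)^⊥` is the image of the dual map: the vectors `(f (Tr g))_g` for the `𝔽₂`-linear forms `f`
on `𝔽_q`, each of which is `x ↦ tr (a x)`. Injectivity holds because the traces of the elements
of `SO⁺(4,q)` exhaust `𝔽_q`. -/

open Module

section DualCode

variable {K V ι : Type*} [Field K] [AddCommGroup V] [Module K V]

theorem setOf_forall_ker_dotProduct_eq_range_dual [Fintype ι] (t : ι → V) :
    {v : ι → K | ∀ u ∈ LinearMap.ker (Fintype.linearCombination K t), v ⬝ᵥ u = 0} =
      Set.range fun (f : Dual K V) i => f (t i) := by
  classical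
  ext v
  have hv : ∀ u, v ⬝ᵥ u = Fintype.linearCombination K v u := fun u => by
    simp [dotProduct, Fintype.linearCombination_apply, mul_comm]
  simp only [Set.mem_ofPred_eq, hv, ← Submodule.mem_dualAnnihilator,
    ← LinearMap.range_dualMap_eq_dualAnnihilator_ker, LinearMap.mem_range, Set.mem_range]
  refine exists_congr fun f => ⟨fun h => funext fun i => ?_, fun h => ?_⟩
  · simpa using LinearMap.congr_fun h (Pi.single i 1)
  · ext u
    simp [← h, Fintype.linearCombination_apply, Pi.single_apply]

variable [FiniteDimensional K V] {B : LinearMap.BilinForm K V}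

theorem range_bilin_eq_setOf_forall_ker_dotProduct [Fintype ι] (hB : B.Nondegenerate)
    (t : ι → V) :
    Set.range (fun a i => B a (t i)) =
      {v : ι → K | ∀ u ∈ LinearMap.ker (Fintype.linearCombination K t), v ⬝ᵥ u = 0} := by
  rw [setOf_forall_ker_dotProduct_eq_range_dual, ← (B.toDual hB).surjective.range_comp]
  rfl

theorem injective_bilin_of_span_eq_top (hB : B.Nondegenerate) {t : ι → V}
    (ht : Submodule.span K (Set.range t) = ⊤) :
    Function.Injective fun a i => B a (t i) := fun _ _ hab =>
  (B.toDual hB).injective <| LinearMap.ext_on_range ht fun i => congr_fun hab i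

end DualCode

section AbsoluteTrace

variable {F : Type} [Field F] [Fintype F] [Algebra (ZMod 2) F] {r : ℕ}

theorem finrank_zmod_two_eq (hF : Fintype.card F = 2 ^ r) : finrank (ZMod 2) F = r := by
  rw [Module.card_eq_pow_finrank (K := ZMod 2), ZMod.card] at hF
  exact Nat.pow_right_injective le_rfl hF

theorem algebraMap_trace_eq_trF (hF : Fintype.card F = 2 ^ r) (x : F) :
    algebraMap (ZMod 2) F (Algebra.trace (ZMod 2) F x) = trF F r x := by
  rw [FiniteField.algebraMap_trace_eq_sum_pow, finrank_zmod_two_eq hF, Nat.card_zmod, trF]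

theorem tr2_eq_trace (hF : Fintype.card F = 2 ^ r) (x : F) :
    tr2 F r x = Algebra.trace (ZMod 2) F x := by
  rw [tr2, ← algebraMap_trace_eq_trF hF]
  obtain h | h : Algebra.trace (ZMod 2) F x = 0 ∨ Algebra.trace (ZMod 2) F x = 1 :=
    (by decide : ∀ c : ZMod 2, c = 0 ∨ c = 1) _
  all_goals simp [h]

end AbsoluteTrace

theorem mem_code_iff {F : Type} [Field F] [Fintype F] [DecidableEq F] [Algebra (ZMod 2) F]
    {ι : Type} [Fintype ι] [DecidableEq ι] (G : Finset (Matrix ι ι F)) (u : G → ZMod 2) :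
    u ∈ code F G ↔
      u ∈ LinearMap.ker (Fintype.linearCombination (ZMod 2) fun g : G => trace (g : Matrix ι ι F)) := by
  simp [code, Fintype.linearCombination_apply, ← Nat.cast_smul_eq_nsmul (ZMod 2)]

section SOplus

variable {F : Type} [Field F]

/-- In the coordinates `M = !![x (inl 0), x (inl 1); x (inr 1), x (inr 0)]`, for which `θ⁺ = det`
in characteristic 2, this is the matrix of `M ↦ X M Yᵀ` with `X = !![s, 1; 1, 0]` and
`Y = !![1, 1; 1, 0]`; its trace is `tr X * tr Y = s`. -/
def soPlusMatrixOfTrace (s : F) : Matrix (Fin 2 ⊕ Fin 2) (Fin 2 ⊕ Fin 2) F :=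
  fromBlocks !![s, s; s, 0] !![1, 1; 0, 1] !![1, 0; 1, 1] 0

theorem trace_soPlusMatrixOfTrace (s : F) : trace (soPlusMatrixOfTrace s) = s := by
  simp [soPlusMatrixOfTrace, trace, Fin.sum_univ_two]

variable [Fintype F] [DecidableEq F]

theorem mem_SOplusGrp_iff {n : ℕ} (w : Matrix (Fin n ⊕ Fin n) (Fin n ⊕ Fin n) F) :
    w ∈ SOplusGrp F n ↔ IsUnit w ∧ (∀ x, thetaPlus F n (w *ᵥ x) = thetaPlus F n x) ∧
      trace (toBlocks₁₂ w * (toBlocks₂₁ w)ᵀ) = 0 := by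
  classical
  simp [SOplusGrp, OplusGrp, and_assoc]

theorem soPlusMatrixOfTrace_mem [CharP F 2] (s : F) : soPlusMatrixOfTrace s ∈ SOplusGrp F 2 := by
  rw [mem_SOplusGrp_iff]
  refine ⟨IsUnit.of_mul_eq_one (fromBlocks 0 !![1, 0; 1, 1] !![1, 1; 0, 1] !![s, s; s, 0]) ?_,
    fun x => ?_, ?_⟩
  · rw [soPlusMatrixOfTrace, fromBlocks_multiply, ← fromBlocks_one]
    congr 1 <;> ext i j <;> fin_cases i <;> fin_cases j <;> simp <;> grind
  · simp [thetaPlus, soPlusMatrixOfTrace, fromBlocks_mulVec, Fin.sum_univ_two, vecHead, vecTail]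
    grind
  · simp [soPlusMatrixOfTrace, trace_fin_two, vecMul, dotProduct, Fin.sum_univ_two]
    grind

end SOplus

theorem stmt16_general (r : ℕ) (F : Type) [Field F] [Fintype F] [DecidableEq F]
    (hF : Fintype.card F = 2 ^ r)
    (G : Finset (Matrix (Fin 2 ⊕ Fin 2) (Fin 2 ⊕ Fin 2) F)) (hG : G = SOplusGrp F 2) :
    Function.Injective
      (fun a : F => fun g : ↥G => tr2 F r (a * Matrix.trace (g : Matrix (Fin 2 ⊕ Fin 2) (Fin 2 ⊕ Fin 2) F))) ∧
    (∀ a b : F, ∀ g : ↥G,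
      tr2 F r ((a + b) * Matrix.trace (g : Matrix (Fin 2 ⊕ Fin 2) (Fin 2 ⊕ Fin 2) F)) =
        tr2 F r (a * Matrix.trace (g : Matrix (Fin 2 ⊕ Fin 2) (Fin 2 ⊕ Fin 2) F)) + tr2 F r (b * Matrix.trace (g : Matrix (Fin 2 ⊕ Fin 2) (Fin 2 ⊕ Fin 2) F))) ∧
    Set.range (fun a : F => fun g : ↥G => tr2 F r (a * Matrix.trace (g : Matrix (Fin 2 ⊕ Fin 2) (Fin 2 ⊕ Fin 2) F))) =
      {v : ↥G → ZMod 2 | ∀ u ∈ code F G, ∑ g : ↥G, v g * u g = 0} := by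
  subst hG
  have : CharP F 2 := charP_of_card_eq_prime_pow hF
  let : Algebra (ZMod 2) F := ZMod.algebra F 2
  have hB := traceForm_nondegenerate (ZMod 2) F
  have hspan : Submodule.span (ZMod 2) (Set.range fun g : SOplusGrp F 2 => trace g.1) = ⊤ :=
    Submodule.eq_top_iff'.2 fun s => Submodule.subset_span
      ⟨⟨_, soPlusMatrixOfTrace_mem s⟩, trace_soPlusMatrixOfTrace s⟩
  simp only [tr2_eq_trace hF, ← Algebra.traceForm_apply]
  refine ⟨injective_bilin_of_span_eq_top hB hspan, fun a b _ => LinearMap.map_add₂ _ a b _, ?_⟩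
  rw [range_bilin_eq_setOf_forall_ker_dotProduct hB]
  simp only [mem_code_iff]
  rfl

theorem stmt16 (r : ℕ) (hr : 1 ≤ r) (F : Type) [Field F] [Fintype F] [DecidableEq F]
    (hF : Fintype.card F = 2 ^ r)
    (G : Finset (Matrix (Fin 2 ⊕ Fin 2) (Fin 2 ⊕ Fin 2) F)) (hG : G = SOplusGrp F 2) :
    Function.Injective
      (fun a : F => fun g : ↥G => tr2 F r (a * Matrix.trace (g : Matrix (Fin 2 ⊕ Fin 2) (Fin 2 ⊕ Fin 2) F))) ∧
    (∀ a b : F, ∀ g : ↥G,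
      tr2 F r ((a + b) * Matrix.trace (g : Matrix (Fin 2 ⊕ Fin 2) (Fin 2 ⊕ Fin 2) F)) =
        tr2 F r (a * Matrix.trace (g : Matrix (Fin 2 ⊕ Fin 2) (Fin 2 ⊕ Fin 2) F)) + tr2 F r (b * Matrix.trace (g : Matrix (Fin 2 ⊕ Fin 2) (Fin 2 ⊕ Fin 2) F))) ∧
    Set.range (fun a : F => fun g : ↥G => tr2 F r (a * Matrix.trace (g : Matrix (Fin 2 ⊕ Fin 2) (Fin 2 ⊕ Fin 2) F))) =
      {v : ↥G → ZMod 2 | ∀ u ∈ code F G, ∑ g : ↥G, v g * u g = 0} :=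
  stmt16_general r F hF G hG
end
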